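/- Under the log-loss, the minimum excess meta-risk equals MEMR_log = H(Y | X, Z, Z_{1:N}) − H(Y | X, W) = I(Y; W | X, Z, Z_{1:N}), provided Y is conditionally independent of (Z, Z_{1:N}, U) given (X, W). -/
import Mathlib


open scoped BigOperators

/-- Distribution (pushforward) of a random variable `X` under weights `p`. -/
noncomputable def distOf {Ω α : Type*} [Fintype Ω] [DecidableEq α]
    (p : Ω → ℝ) (X : Ω → α) (a : α) : ℝ :=
  ∑ ω, if X ω = a then p ω else 0

/-- Shannon entropy of a random variable. -/
noncomputable def entOf {Ω α : Type*} [Fintype Ω] [Fintype α] [DecidableEq α]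
    (p : Ω → ℝ) (X : Ω → α) : ℝ :=
  -∑ a, distOf p X a * Real.log (distOf p X a)

/-- Conditional entropy H(Y|X). -/
noncomputable def condEntOf {Ω α β : Type*} [Fintype Ω] [Fintype α] [Fintype β]
    [DecidableEq α] [DecidableEq β] (p : Ω → ℝ) (Y : Ω → β) (X : Ω → α) : ℝ :=
  entOf p (fun ω => (Y ω, X ω)) - entOf p X

/-- Mutual information I(A;B). -/
noncomputable def miOf {Ω α β : Type*} [Fintype Ω] [Fintype α] [Fintype β]
    [DecidableEq α] [DecidableEq β] (p : Ω → ℝ) (A : Ω → α) (B : Ω → β) : ℝ :=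
  entOf p A + entOf p B - entOf p (fun ω => (A ω, B ω))

/-- Conditional mutual information I(A;B|C). -/
noncomputable def cmiOf {Ω α β γ : Type*} [Fintype Ω] [Fintype α] [Fintype β] [Fintype γ]
    [DecidableEq α] [DecidableEq β] [DecidableEq γ]
    (p : Ω → ℝ) (A : Ω → α) (B : Ω → β) (C : Ω → γ) : ℝ :=
  condEntOf p A C - condEntOf p A (fun ω => (B ω, C ω))

/-- `p` is a probability mass function on the finite sample space. -/
def IsPMF {Ω : Type*} [Fintype Ω] (p : Ω → ℝ) : Prop :=
  (∀ ω, 0 ≤ p ω) ∧ ∑ ω, p ω = 1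

/-- A and B are conditionally independent given C. -/
def CondIndep {Ω α β γ : Type*} [Fintype Ω] [DecidableEq α] [DecidableEq β] [DecidableEq γ]
    (p : Ω → ℝ) (A : Ω → α) (B : Ω → β) (C : Ω → γ) : Prop :=
  ∀ a b c, distOf p (fun ω => (A ω, B ω, C ω)) (a, b, c) * distOf p C c =
    distOf p (fun ω => (A ω, C ω)) (a, c) * distOf p (fun ω => (B ω, C ω)) (b, c)

/-- Equality in distribution. -/
def IdentDist {Ω α : Type*} [Fintype Ω] [DecidableEq α]
    (p : Ω → ℝ) (X Y : Ω → α) : Prop := ∀ a, distOf p X a = distOf p Y a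

/-- Bayesian risk: infimum over measurable (automatic here) decision rules of the
expected loss. -/
noncomputable def risk {Ω α 𝒞 𝒜 : Type*} [Fintype Ω]
    (p : Ω → ℝ) (ℓ : 𝒞 → 𝒜 → ℝ) (C : Ω → 𝒞) (A : Ω → α) : ℝ :=
  ⨅ ψ : α → 𝒜, ∑ ω, p ω * ℓ (C ω) (ψ (A ω))

/-- The action space for the log-loss: (strictly positive) probability
distributions on the finite label set `𝒴`. -/
def PDist (𝒴 : Type*) [Fintype 𝒴] : Type _ :=
  {q : 𝒴 → ℝ // (∀ y, 0 < q y) ∧ ∑ y, q y = 1}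

/-- Bayesian risk under the log-loss ℓ(y,q) = −log q(y). -/
noncomputable def riskLog {Ω α 𝒴 : Type*} [Fintype Ω] [Fintype 𝒴]
    (p : Ω → ℝ) (Y : Ω → 𝒴) (A : Ω → α) : ℝ :=
  ⨅ ψ : α → PDist 𝒴, ∑ ω, p ω * (-Real.log ((ψ (A ω)).1 (Y ω)))


section Helpers
variable {Ω : Type*} [Fintype Ω]

lemma distOf_nonneg {α : Type*} [DecidableEq α] {p : Ω → ℝ} (hp0 : ∀ ω, 0 ≤ p ω)
    (X : Ω → α) (a : α) : 0 ≤ distOf p X a :=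
  Finset.sum_nonneg fun ω _ => by by_cases h : X ω = a <;> simp [h, hp0 ω]

lemma sum_distOf {α : Type*} [Fintype α] [DecidableEq α] (p : Ω → ℝ) (X : Ω → α) :
    ∑ a, distOf p X a = ∑ ω, p ω := by
  unfold distOf
  rw [Finset.sum_comm]
  exact Finset.sum_congr rfl fun ω _ => by simp [Finset.sum_ite_eq]

lemma expect_comp {α : Type*} [Fintype α] [DecidableEq α] (p : Ω → ℝ) (X : Ω → α) (g : α → ℝ) :
    ∑ ω, p ω * g (X ω) = ∑ a, distOf p X a * g a := by
  unfold distOf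
  simp only [Finset.sum_mul]
  rw [Finset.sum_comm]
  refine Finset.sum_congr rfl fun ω _ => ?_
  simp [ite_mul, Finset.sum_ite_eq]

lemma distOf_comp_inj {α κ : Type*} [DecidableEq α] [DecidableEq κ] (p : Ω → ℝ)
    (f : α → κ) (hf : Function.Injective f) (X : Ω → α) (a : α) :
    distOf p (fun ω => f (X ω)) (f a) = distOf p X a := by
  unfold distOf; exact Finset.sum_congr rfl fun ω _ => by simp [hf.eq_iff]

lemma sum_distOf_eq {α δ κ : Type*} [Fintype δ] [DecidableEq α] [DecidableEq δ] [DecidableEq κ]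
    (p : Ω → ℝ) (T : Ω → κ) (V : Ω → α) (D : Ω → δ) (f : α → δ → κ)
    (hf : ∀ a d a' d', f a d = f a' d' → a = a' ∧ d = d')
    (hT : ∀ ω, T ω = f (V ω) (D ω)) (a : α) :
    ∑ d, distOf p T (f a d) = distOf p V a := by
  unfold distOf
  rw [Finset.sum_comm]
  refine Finset.sum_congr rfl fun ω _ => ?_
  have h1 : ∀ d, (T ω = f a d) ↔ (V ω = a ∧ D ω = d) := by
    intro d
    constructor
    · intro h; exact hf _ _ _ _ ((hT ω).symm.trans h)
    · rintro ⟨h1, h2⟩; rw [hT ω, h1, h2]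
  simp only [h1]
  by_cases h : V ω = a
  · simp [h, Finset.sum_ite_eq]
  · simp [h]

lemma distOf_pos {α δ κ : Type*} [Fintype δ] [DecidableEq α] [DecidableEq δ] [DecidableEq κ]
    (p : Ω → ℝ) (T : Ω → κ) (V : Ω → α) (D : Ω → δ) (f : α → δ → κ)
    (hf : ∀ a d a' d', f a d = f a' d' → a = a' ∧ d = d')
    (hT : ∀ ω, T ω = f (V ω) (D ω))
    (hpos : ∀ k, 0 < distOf p T k) (d : δ) (a : α) :
    0 < distOf p V a := by
  rw [← sum_distOf_eq p T V D f hf hT a]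
  exact Finset.sum_pos (fun i _ => hpos _) ⟨d, Finset.mem_univ d⟩

lemma entOf_comp_equiv {α κ : Type*} [Fintype α] [Fintype κ] [DecidableEq α] [DecidableEq κ]
    (p : Ω → ℝ) (e : α ≃ κ) (X : Ω → α) :
    entOf p (fun ω => e (X ω)) = entOf p X := by
  unfold entOf
  congr 1
  refine (Fintype.sum_equiv e _ _ fun a => ?_).symm
  rw [distOf_comp_inj p e e.injective X a]

lemma condEntOf_comp_equiv {α κ 𝒴 : Type*} [Fintype α] [Fintype κ] [Fintype 𝒴]
    [DecidableEq α] [DecidableEq κ] [DecidableEq 𝒴]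
    (p : Ω → ℝ) (e : α ≃ κ) (Y : Ω → 𝒴) (A : Ω → α) :
    condEntOf p Y (fun ω => e (A ω)) = condEntOf p Y A := by
  unfold condEntOf
  rw [entOf_comp_equiv p e A]
  congr 1
  have h : (fun ω => (Y ω, e (A ω))) = (fun ω => ((Equiv.refl 𝒴).prodCongr e) (Y ω, A ω)) := rfl
  rw [h, entOf_comp_equiv]

end Helpers

section Risk
variable {Ω : Type*} [Fintype Ω]

lemma riskLog_eq_condEnt {α 𝒴 : Type*} [Fintype α] [Fintype 𝒴] [DecidableEq α] [DecidableEq 𝒴]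
    [Nonempty 𝒴] (p : Ω → ℝ) (hp : IsPMF p) (Y : Ω → 𝒴) (A : Ω → α)
    (hpos : ∀ v, 0 < distOf p (fun ω => (Y ω, A ω)) v) :
    riskLog p Y A = condEntOf p Y A := by
  classical
  set YA : Ω → 𝒴 × α := fun ω => (Y ω, A ω) with hYA
  set J : 𝒴 × α → ℝ := distOf p YA with hJdef
  have hJpos : ∀ v, 0 < J v := hpos
  have hJ1 : ∑ v, J v = 1 := by rw [hJdef, sum_distOf]; exact hp.2
  have hdA : ∀ a, distOf p A a = ∑ y, J (y, a) := fun a =>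
    (sum_distOf_eq p YA A Y (fun a y => (y, a))
      (fun a d a' d' h => by simp [Prod.ext_iff] at h; tauto) (fun ω => rfl) a).symm
  have hdApos : ∀ a, 0 < distOf p A a := fun a => by
    rw [hdA a]; exact Finset.sum_pos (fun y _ => hJpos _) Finset.univ_nonempty
  have hdA1 : ∑ a, distOf p A a = 1 := by rw [sum_distOf]; exact hp.2
  -- the Bayes-optimal predictor
  set q : α → PDist 𝒴 := fun a =>
    ⟨fun y => J (y, a) / distOf p A a,
     fun y => div_pos (hJpos _) (hdApos a),
     by rw [← Finset.sum_div, ← hdA a, div_self (hdApos a).ne']⟩ with hq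
  have hΩ : Nonempty Ω := by
    by_contra h
    rw [not_nonempty_iff] at h
    have h2 := hp.2
    rw [Finset.univ_eq_empty, Finset.sum_empty] at h2
    norm_num at h2
  obtain ⟨ω₀⟩ := hΩ
  haveI : Nonempty (PDist 𝒴) := ⟨q (A ω₀)⟩
  haveI : Nonempty (α → PDist 𝒴) := ⟨fun _ => q (A ω₀)⟩
  -- expected loss of a predictor, as a sum over values
  have hF : ∀ ψ : α → PDist 𝒴,
      (∑ ω, p ω * (-Real.log ((ψ (A ω)).1 (Y ω)))) =
        ∑ v, J v * (-Real.log ((ψ v.2).1 v.1)) :=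
    fun ψ => expect_comp p YA (fun v => -Real.log ((ψ v.2).1 v.1))
  -- value of the optimal predictor
  have hsumlog : ∀ ψ : α → PDist 𝒴, ∑ v : 𝒴 × α, distOf p A v.2 * (ψ v.2).1 v.1 = 1 := by
    intro ψ
    rw [Fintype.sum_prod_type, Finset.sum_comm]
    calc ∑ a, ∑ y, distOf p A a * (ψ a).1 y
        = ∑ a, distOf p A a * ∑ y, (ψ a).1 y := by
          exact Finset.sum_congr rfl fun a _ => (Finset.mul_sum _ _ _).symm
      _ = ∑ a, distOf p A a := by
          exact Finset.sum_congr rfl fun a _ => by rw [(ψ a).2.2, mul_one]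
      _ = 1 := hdA1
  have hFq : (∑ v, J v * (-Real.log ((q v.2).1 v.1))) = condEntOf p Y A := by
    have hqval : ∀ v : 𝒴 × α, (q v.2).1 v.1 = J v / distOf p A v.2 := fun v => rfl
    have step : ∀ v : 𝒴 × α, J v * (-Real.log ((q v.2).1 v.1)) =
        -(J v * Real.log (J v)) + J v * Real.log (distOf p A v.2) := by
      intro v
      rw [hqval, Real.log_div (hJpos v).ne' (hdApos v.2).ne']
      ring
    rw [Finset.sum_congr rfl fun v _ => step v, Finset.sum_add_distrib]
    have h1 : ∑ v : 𝒴 × α, -(J v * Real.log (J v)) = entOf p YA := by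
      rw [entOf.eq_def, ← Finset.sum_neg_distrib]
    have h2 : ∑ v : 𝒴 × α, J v * Real.log (distOf p A v.2) = -entOf p A := by
      rw [Fintype.sum_prod_type, Finset.sum_comm]
      have : ∀ a, ∑ y, J (y, a) * Real.log (distOf p A a)
          = distOf p A a * Real.log (distOf p A a) := by
        intro a
        rw [← Finset.sum_mul, ← hdA a]
      rw [Finset.sum_congr rfl fun a _ => this a, entOf.eq_def, neg_neg]
    rw [h1, h2, condEntOf.eq_def]
    ring
  -- Gibbs' inequality
  have hGibbs : ∀ ψ : α → PDist 𝒴,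
      condEntOf p Y A ≤ ∑ v, J v * (-Real.log ((ψ v.2).1 v.1)) := by
    intro ψ
    rw [← hFq]
    have hterm : ∀ v : 𝒴 × α,
        J v * (-Real.log ((q v.2).1 v.1)) + (J v - distOf p A v.2 * (ψ v.2).1 v.1)
          ≤ J v * (-Real.log ((ψ v.2).1 v.1)) := by
      intro v
      have hqval : (q v.2).1 v.1 = J v / distOf p A v.2 := rfl
      have hψpos : 0 < (ψ v.2).1 v.1 := (ψ v.2).2.1 v.1
      have hqpos : 0 < J v / distOf p A v.2 := div_pos (hJpos v) (hdApos v.2)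
      have h := Real.log_le_sub_one_of_pos (div_pos hψpos hqpos)
      rw [Real.log_div hψpos.ne' hqpos.ne'] at h
      have h' := mul_le_mul_of_nonneg_left h (hJpos v).le
      have e1 : J v * ((ψ v.2).1 v.1 / (J v / distOf p A v.2))
          = distOf p A v.2 * (ψ v.2).1 v.1 := by
        field_simp [(hJpos v).ne']
      rw [hqval]
      nlinarith [h', e1]
    have hsum := Finset.sum_le_sum (fun v (_ : v ∈ Finset.univ) => hterm v)
    rw [Finset.sum_add_distrib, Finset.sum_sub_distrib, hJ1, hsumlog ψ] at hsum
    linarith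
  -- conclude
  rw [riskLog.eq_def]
  refine le_antisymm ?_ ?_
  · refine le_trans (ciInf_le ⟨condEntOf p Y A, ?_⟩ q) ?_
    · rintro x ⟨ψ, rfl⟩
      show condEntOf p Y A ≤ ∑ ω, p ω * (-Real.log ((ψ (A ω)).1 (Y ω)))
      rw [hF ψ]; exact hGibbs ψ
    · show (∑ ω, p ω * (-Real.log ((q (A ω)).1 (Y ω)))) ≤ condEntOf p Y A
      rw [hF q, hFq]
  · refine le_ciInf fun ψ => ?_
    have h := hGibbs ψ
    rw [← hF ψ] at h
    exact h
end Risk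

section CI
variable {Ω : Type*} [Fintype Ω]

lemma condEnt_pair_of_condIndep {β γ 𝒴 : Type*} [Fintype β] [Fintype γ] [Fintype 𝒴]
    [DecidableEq β] [DecidableEq γ] [DecidableEq 𝒴] [Nonempty β] [Nonempty 𝒴]
    (p : Ω → ℝ) (Y : Ω → 𝒴) (B : Ω → β) (C : Ω → γ)
    (hpos : ∀ v, 0 < distOf p (fun ω => (Y ω, B ω, C ω)) v)
    (hci : CondIndep p Y B C) :
    condEntOf p Y (fun ω => (B ω, C ω)) = condEntOf p Y C := by
  classical
  have expand3 : ∀ g : 𝒴 × β × γ → ℝ, ∑ v, g v = ∑ y, ∑ b, ∑ c, g (y, b, c) := by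
    intro g
    rw [Fintype.sum_prod_type]
    exact Finset.sum_congr rfl fun y _ => Fintype.sum_prod_type _
  -- marginals
  have hBC : ∀ b c, distOf p (fun ω => (B ω, C ω)) (b, c)
      = ∑ y, distOf p (fun ω => (Y ω, B ω, C ω)) (y, b, c) := fun b c =>
    (sum_distOf_eq p (fun ω => (Y ω, B ω, C ω)) (fun ω => (B ω, C ω)) Y
      (fun bc y => (y, bc)) (fun a d a' d' h => by simp [Prod.ext_iff] at h ⊢; tauto)
      (fun ω => rfl) (b, c)).symm
  have hYC : ∀ y c, distOf p (fun ω => (Y ω, C ω)) (y, c)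
      = ∑ b, distOf p (fun ω => (Y ω, B ω, C ω)) (y, b, c) := fun y c =>
    (sum_distOf_eq p (fun ω => (Y ω, B ω, C ω)) (fun ω => (Y ω, C ω)) B
      (fun yc b => (yc.1, b, yc.2)) (fun a d a' d' h => by simp [Prod.ext_iff] at h ⊢; tauto)
      (fun ω => rfl) (y, c)).symm
  have hC : ∀ c, distOf p C c
      = ∑ y, ∑ b, distOf p (fun ω => (Y ω, B ω, C ω)) (y, b, c) := by
    intro c
    rw [← sum_distOf_eq p (fun ω => (Y ω, B ω, C ω)) C (fun ω => (Y ω, B ω))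
      (fun c yb => (yb.1, yb.2, c)) (fun a d a' d' h => by simp [Prod.ext_iff] at h ⊢; tauto)
      (fun ω => rfl) c, Fintype.sum_prod_type]
  have hBCpos : ∀ b c, 0 < distOf p (fun ω => (B ω, C ω)) (b, c) := fun b c => by
    rw [hBC]; exact Finset.sum_pos (fun y _ => hpos _) Finset.univ_nonempty
  have hYCpos : ∀ y c, 0 < distOf p (fun ω => (Y ω, C ω)) (y, c) := fun y c => by
    rw [hYC]; exact Finset.sum_pos (fun b _ => hpos _) Finset.univ_nonempty
  have hCpos : ∀ c, 0 < distOf p C c := fun c => by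
    rw [hC]
    exact Finset.sum_pos (fun y _ => Finset.sum_pos (fun b _ => hpos _) Finset.univ_nonempty)
      Finset.univ_nonempty
  -- abbreviate
  set J : 𝒴 × β × γ → ℝ := distOf p (fun ω => (Y ω, B ω, C ω)) with hJ
  set PBC : β × γ → ℝ := distOf p (fun ω => (B ω, C ω)) with hPBC
  set PYC : 𝒴 × γ → ℝ := distOf p (fun ω => (Y ω, C ω)) with hPYC
  set PC : γ → ℝ := distOf p C with hPC
  -- pointwise key identity
  have key : ∀ y b c, J (y, b, c) * Real.log (J (y, b, c)) + J (y, b, c) * Real.log (PC c)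
      = J (y, b, c) * Real.log (PYC (y, c)) + J (y, b, c) * Real.log (PBC (b, c)) := by
    intro y b c
    have h := hci y b c
    have h1 : Real.log (J (y, b, c) * PC c) = Real.log (PYC (y, c) * PBC (b, c)) := by rw [h]
    rw [Real.log_mul (hpos (y, b, c)).ne' (hCpos c).ne',
        Real.log_mul (hYCpos y c).ne' (hBCpos b c).ne'] at h1
    have h2 := congrArg (fun t => J (y, b, c) * t) h1
    simp only [mul_add] at h2
    exact h2
  -- the four sums
  have hh2 : ∀ b c, ∑ y, J (y, b, c) * Real.log (PBC (b, c))
      = PBC (b, c) * Real.log (PBC (b, c)) := fun b c => by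
    rw [← Finset.sum_mul, ← hBC b c]
  have hh3 : ∀ y c, ∑ b, J (y, b, c) * Real.log (PYC (y, c))
      = PYC (y, c) * Real.log (PYC (y, c)) := fun y c => by
    rw [← Finset.sum_mul, ← hYC y c]
  have hh4 : ∀ c, ∑ y, ∑ b, J (y, b, c) * Real.log (PC c)
      = PC c * Real.log (PC c) := fun c => by
    calc ∑ y, ∑ b, J (y, b, c) * Real.log (PC c)
        = ∑ y, (∑ b, J (y, b, c)) * Real.log (PC c) :=
          Finset.sum_congr rfl fun y _ => (Finset.sum_mul _ _ _).symm
      _ = (∑ y, ∑ b, J (y, b, c)) * Real.log (PC c) := (Finset.sum_mul _ _ _).symm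
      _ = PC c * Real.log (PC c) := by rw [← hC c]
  have hE1 : entOf p (fun ω => (Y ω, B ω, C ω))
      = -∑ y, ∑ b, ∑ c, J (y, b, c) * Real.log (J (y, b, c)) := by
    rw [entOf.eq_def, expand3 (fun v => J v * Real.log (J v))]
  have hE2 : entOf p (fun ω => (B ω, C ω))
      = -∑ y, ∑ b, ∑ c, J (y, b, c) * Real.log (PBC (b, c)) := by
    rw [entOf.eq_def]
    congr 1
    rw [Fintype.sum_prod_type]
    calc ∑ b, ∑ c, PBC (b, c) * Real.log (PBC (b, c))
        = ∑ b, ∑ c, ∑ y, J (y, b, c) * Real.log (PBC (b, c)) :=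
          Finset.sum_congr rfl fun b _ => Finset.sum_congr rfl fun c _ => (hh2 b c).symm
      _ = ∑ b, ∑ y, ∑ c, J (y, b, c) * Real.log (PBC (b, c)) :=
          Finset.sum_congr rfl fun b _ => Finset.sum_comm
      _ = ∑ y, ∑ b, ∑ c, J (y, b, c) * Real.log (PBC (b, c)) := Finset.sum_comm
  have hE3 : entOf p (fun ω => (Y ω, C ω))
      = -∑ y, ∑ b, ∑ c, J (y, b, c) * Real.log (PYC (y, c)) := by
    rw [entOf.eq_def]
    congr 1
    rw [Fintype.sum_prod_type]
    calc ∑ y, ∑ c, PYC (y, c) * Real.log (PYC (y, c))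
        = ∑ y, ∑ c, ∑ b, J (y, b, c) * Real.log (PYC (y, c)) :=
          Finset.sum_congr rfl fun y _ => Finset.sum_congr rfl fun c _ => (hh3 y c).symm
      _ = ∑ y, ∑ b, ∑ c, J (y, b, c) * Real.log (PYC (y, c)) :=
          Finset.sum_congr rfl fun y _ => Finset.sum_comm
  have hE4 : entOf p C
      = -∑ y, ∑ b, ∑ c, J (y, b, c) * Real.log (PC c) := by
    rw [entOf.eq_def]
    congr 1
    calc ∑ c, PC c * Real.log (PC c)
        = ∑ c, ∑ y, ∑ b, J (y, b, c) * Real.log (PC c) :=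
          Finset.sum_congr rfl fun c _ => (hh4 c).symm
      _ = ∑ y, ∑ c, ∑ b, J (y, b, c) * Real.log (PC c) := Finset.sum_comm
      _ = ∑ y, ∑ b, ∑ c, J (y, b, c) * Real.log (PC c) :=
          Finset.sum_congr rfl fun y _ => Finset.sum_comm
  -- sum the key identity
  have hsplit : ∀ u v : 𝒴 → β → γ → ℝ,
      (∑ y, ∑ b, ∑ c, (u y b c + v y b c))
        = (∑ y, ∑ b, ∑ c, u y b c) + (∑ y, ∑ b, ∑ c, v y b c) := by
    intro u v
    simp [Finset.sum_add_distrib]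
  have hS : (∑ y, ∑ b, ∑ c, J (y, b, c) * Real.log (J (y, b, c)))
        + (∑ y, ∑ b, ∑ c, J (y, b, c) * Real.log (PC c))
      = (∑ y, ∑ b, ∑ c, J (y, b, c) * Real.log (PYC (y, c)))
        + (∑ y, ∑ b, ∑ c, J (y, b, c) * Real.log (PBC (b, c))) := by
    rw [← hsplit, ← hsplit]
    exact Finset.sum_congr rfl fun y _ => Finset.sum_congr rfl fun b _ =>
      Finset.sum_congr rfl fun c _ => key y b c
  simp only [condEntOf]
  rw [hE1, hE2, hE3, hE4]
  linarith
end CI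


/-- under the log-loss, the minimum excess meta-risk satisfies
MEMR_log = H(Y|X,Z,Z_{1:N}) − H(Y|X,W) = I(Y;W|X,Z,Z_{1:N}),
provided Y ⊥ (Z, Z_{1:N}, U) | (X,W). -/
theorem memr_log_eq_cmi
    {Ω 𝒳 ζ τ 𝒲 𝒰 𝒴 : Type*} [Fintype Ω] [Fintype 𝒳] [Fintype ζ] [Fintype τ]
    [Fintype 𝒲] [Fintype 𝒰] [Fintype 𝒴]
    [DecidableEq 𝒳] [DecidableEq ζ] [DecidableEq τ] [DecidableEq 𝒲]
    [DecidableEq 𝒰] [DecidableEq 𝒴] [Nonempty 𝒴]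
    (p : Ω → ℝ) (hp : IsPMF p)
    (X : Ω → 𝒳) (Z : Ω → ζ) (Z1N : Ω → τ) (W : Ω → 𝒲) (U : Ω → 𝒰) (Y : Ω → 𝒴)
    (hpos : ∀ v, 0 < distOf p (fun ω => (Y ω, X ω, Z ω, Z1N ω, W ω, U ω)) v)
    (hci : CondIndep p Y (fun ω => (Z ω, Z1N ω, U ω)) (fun ω => (X ω, W ω))) :
    riskLog p Y (fun ω => (X ω, Z ω, Z1N ω)) - riskLog p Y (fun ω => (X ω, W ω, U ω)) =
      condEntOf p Y (fun ω => (X ω, Z ω, Z1N ω)) - condEntOf p Y (fun ω => (X ω, W ω)) ∧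
    condEntOf p Y (fun ω => (X ω, Z ω, Z1N ω)) - condEntOf p Y (fun ω => (X ω, W ω)) =
      cmiOf p Y W (fun ω => (X ω, Z ω, Z1N ω)) := by
  classical
  have hΩ : Nonempty Ω := by
    by_contra h
    rw [not_nonempty_iff] at h
    have h2 := hp.2
    rw [Finset.univ_eq_empty, Finset.sum_empty] at h2
    norm_num at h2
  obtain ⟨ω₀⟩ := hΩ
  -- positivity of the two joint marginals used by the risk lemma
  have h1pos : ∀ v, 0 < distOf p (fun ω => (Y ω, X ω, Z ω, Z1N ω)) v := fun v =>
    distOf_pos p (fun ω => (Y ω, X ω, Z ω, Z1N ω, W ω, U ω))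
      (fun ω => (Y ω, X ω, Z ω, Z1N ω)) (fun ω => (W ω, U ω))
      (fun a d => (a.1, a.2.1, a.2.2.1, a.2.2.2, d.1, d.2))
      (fun a d a' d' h => by simp [Prod.ext_iff] at h ⊢; tauto)
      (fun ω => rfl) hpos (W ω₀, U ω₀) v
  have h2pos : ∀ v, 0 < distOf p (fun ω => (Y ω, X ω, W ω, U ω)) v := fun v =>
    distOf_pos p (fun ω => (Y ω, X ω, Z ω, Z1N ω, W ω, U ω))
      (fun ω => (Y ω, X ω, W ω, U ω)) (fun ω => (Z ω, Z1N ω))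
      (fun a d => (a.1, a.2.1, d.1, d.2, a.2.2.1, a.2.2.2))
      (fun a d a' d' h => by simp [Prod.ext_iff] at h ⊢; tauto)
      (fun ω => rfl) hpos (Z ω₀, Z1N ω₀) v
  have posU : ∀ v, 0 < distOf p (fun ω => (Y ω, U ω, (X ω, W ω))) v := fun v =>
    distOf_pos p (fun ω => (Y ω, X ω, Z ω, Z1N ω, W ω, U ω))
      (fun ω => (Y ω, U ω, (X ω, W ω))) (fun ω => (Z ω, Z1N ω))
      (fun a d => (a.1, a.2.2.1, d.1, d.2, a.2.2.2, a.2.1))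
      (fun a d a' d' h => by simp [Prod.ext_iff] at h ⊢; tauto)
      (fun ω => rfl) hpos (Z ω₀, Z1N ω₀) v
  have posB : ∀ v, 0 < distOf p (fun ω => (Y ω, (Z ω, Z1N ω), (X ω, W ω))) v := fun v =>
    distOf_pos p (fun ω => (Y ω, X ω, Z ω, Z1N ω, W ω, U ω))
      (fun ω => (Y ω, (Z ω, Z1N ω), (X ω, W ω))) U
      (fun a d => (a.1, a.2.2.1, a.2.1.1, a.2.1.2, a.2.2.2, d))
      (fun a d a' d' h => by simp [Prod.ext_iff] at h ⊢; tauto)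
      (fun ω => rfl) hpos (U ω₀) v
  -- marginalized conditional independences
  have ciU : CondIndep p Y U (fun ω => (X ω, W ω)) := by
    intro y u c
    have e1 : distOf p (fun ω => (Y ω, U ω, (X ω, W ω))) (y, u, c)
        = ∑ zt : ζ × τ, distOf p (fun ω => (Y ω, (Z ω, Z1N ω, U ω), (X ω, W ω)))
            (y, (zt.1, zt.2, u), c) :=
      (sum_distOf_eq p (fun ω => (Y ω, (Z ω, Z1N ω, U ω), (X ω, W ω)))
        (fun ω => (Y ω, U ω, (X ω, W ω))) (fun ω => (Z ω, Z1N ω))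
        (fun a d => (a.1, (d.1, d.2, a.2.1), a.2.2))
        (fun a d a' d' h => by simp [Prod.ext_iff] at h ⊢; tauto)
        (fun ω => rfl) (y, u, c)).symm
    have e2 : distOf p (fun ω => (U ω, (X ω, W ω))) (u, c)
        = ∑ zt : ζ × τ, distOf p (fun ω => ((Z ω, Z1N ω, U ω), (X ω, W ω)))
            ((zt.1, zt.2, u), c) :=
      (sum_distOf_eq p (fun ω => ((Z ω, Z1N ω, U ω), (X ω, W ω)))
        (fun ω => (U ω, (X ω, W ω))) (fun ω => (Z ω, Z1N ω))
        (fun a d => ((d.1, d.2, a.1), a.2))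
        (fun a d a' d' h => by simp [Prod.ext_iff] at h ⊢; tauto)
        (fun ω => rfl) (u, c)).symm
    rw [e1, e2, Finset.sum_mul, Finset.mul_sum]
    exact Finset.sum_congr rfl fun zt _ => hci y (zt.1, zt.2, u) c
  have ciB : CondIndep p Y (fun ω => (Z ω, Z1N ω)) (fun ω => (X ω, W ω)) := by
    intro y zt c
    have e1 : distOf p (fun ω => (Y ω, (Z ω, Z1N ω), (X ω, W ω))) (y, zt, c)
        = ∑ u : 𝒰, distOf p (fun ω => (Y ω, (Z ω, Z1N ω, U ω), (X ω, W ω)))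
            (y, (zt.1, zt.2, u), c) :=
      (sum_distOf_eq p (fun ω => (Y ω, (Z ω, Z1N ω, U ω), (X ω, W ω)))
        (fun ω => (Y ω, (Z ω, Z1N ω), (X ω, W ω))) U
        (fun a d => (a.1, (a.2.1.1, a.2.1.2, d), a.2.2))
        (fun a d a' d' h => by simp [Prod.ext_iff] at h ⊢; tauto)
        (fun ω => rfl) (y, zt, c)).symm
    have e2 : distOf p (fun ω => ((Z ω, Z1N ω), (X ω, W ω))) (zt, c)
        = ∑ u : 𝒰, distOf p (fun ω => ((Z ω, Z1N ω, U ω), (X ω, W ω)))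
            ((zt.1, zt.2, u), c) :=
      (sum_distOf_eq p (fun ω => ((Z ω, Z1N ω, U ω), (X ω, W ω)))
        (fun ω => ((Z ω, Z1N ω), (X ω, W ω))) U
        (fun a d => ((a.1.1, a.1.2, d), a.2))
        (fun a d a' d' h => by simp [Prod.ext_iff] at h ⊢; tauto)
        (fun ω => rfl) (zt, c)).symm
    rw [e1, e2, Finset.sum_mul, Finset.mul_sum]
    exact Finset.sum_congr rfl fun u _ => hci y (zt.1, zt.2, u) c
  -- conditional entropy collapses
  haveI : Nonempty 𝒰 := ⟨U ω₀⟩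
  haveI : Nonempty (ζ × τ) := ⟨(Z ω₀, Z1N ω₀)⟩
  have hU : condEntOf p Y (fun ω => (U ω, (X ω, W ω))) = condEntOf p Y (fun ω => (X ω, W ω)) :=
    condEnt_pair_of_condIndep p Y U (fun ω => (X ω, W ω)) posU ciU
  have hB : condEntOf p Y (fun ω => ((Z ω, Z1N ω), (X ω, W ω)))
      = condEntOf p Y (fun ω => (X ω, W ω)) :=
    condEnt_pair_of_condIndep p Y (fun ω => (Z ω, Z1N ω)) (fun ω => (X ω, W ω)) posB ciB
  let e3 : (𝒳 × 𝒲 × 𝒰) ≃ (𝒰 × 𝒳 × 𝒲) :=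
    ⟨fun v => (v.2.2, v.1, v.2.1), fun v => (v.2.1, v.2.2, v.1), fun v => rfl, fun v => rfl⟩
  have h3 : condEntOf p Y (fun ω => (X ω, W ω, U ω)) = condEntOf p Y (fun ω => (X ω, W ω)) := by
    exact (condEntOf_comp_equiv p e3 Y (fun ω => (X ω, W ω, U ω))).symm.trans hU
  let e4 : (𝒲 × 𝒳 × ζ × τ) ≃ ((ζ × τ) × 𝒳 × 𝒲) :=
    ⟨fun v => ((v.2.2.1, v.2.2.2), v.2.1, v.1), fun v => (v.2.2, v.2.1, v.1.1, v.1.2),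
      fun v => rfl, fun v => rfl⟩
  have h4 : condEntOf p Y (fun ω => (W ω, X ω, Z ω, Z1N ω))
      = condEntOf p Y (fun ω => (X ω, W ω)) := by
    exact (condEntOf_comp_equiv p e4 Y (fun ω => (W ω, X ω, Z ω, Z1N ω))).symm.trans hB
  -- risks equal conditional entropies
  have r1 : riskLog p Y (fun ω => (X ω, Z ω, Z1N ω))
      = condEntOf p Y (fun ω => (X ω, Z ω, Z1N ω)) :=
    riskLog_eq_condEnt p hp Y (fun ω => (X ω, Z ω, Z1N ω)) h1pos
  have r2 : riskLog p Y (fun ω => (X ω, W ω, U ω))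
      = condEntOf p Y (fun ω => (X ω, W ω, U ω)) :=
    riskLog_eq_condEnt p hp Y (fun ω => (X ω, W ω, U ω)) h2pos
  constructor
  · rw [r1, r2, h3]
  · simp only [cmiOf]
    rw [h4]
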